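/- Suppose α ≥ 3. Then the trajectory is bounded, i.e. sup_{t ≥ t₀} ‖x(t)‖ < +∞, and the speed satisfies ‖ẋ(t)‖ = O(1/t) as t → +∞, i.e. there exists M ≥ 0 with ‖ẋ(t)‖ ≤ M/t for all t ≥ t₀. -/

import Mathlib

/-!
With `p t = (α - 1) • (x t - x⋆) + t • ẋ t`, the energy
`E t = t² (Φ (x t) - Φ x⋆) + ‖p t‖² / 2` satisfies
`E' t = 2 t (Φ (x t) - Φ x⋆) - (α - 1) t ⟪∇Φ (x t), x t - x⋆⟫ ≤ (3 - α) t (Φ (x t) - Φ x⋆)`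
by convexity, so for `α ≥ 3` it is nonincreasing and `p` stays bounded.
Since `p t = t^(2 - α) (t^(α - 1) (x t - x⋆))'`, integrating gives a bound on `x t - x⋆`, and then
`t ẋ t = p t - (α - 1) (x t - x⋆)` is bounded too.
-/

open Set
open scoped RealInnerProductSpace

theorem ConvexOn.add_le_of_hasFDerivAt {E : Type*} [NormedAddCommGroup E] [NormedSpace ℝ E]
    {s : Set E} {f : E → ℝ} {f' : E →L[ℝ] ℝ} {z w : E}
    (hf : ConvexOn ℝ s f) (hz : z ∈ s) (hw : w ∈ s) (hf' : HasFDerivAt f f' z) :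
    f z + f' (w - z) ≤ f w := by
  let ℓ : ℝ →ᵃ[ℝ] E := AffineMap.lineMap z w
  have hderiv : HasDerivAt (f ∘ ℓ) (f' (w - z)) 0 := by
    refine HasFDerivAt.comp_hasDerivAt (0 : ℝ) ?_ AffineMap.hasDerivAt_lineMap
    simpa [ℓ] using hf'
  have hslope := (hf.comp_affineMap ℓ).le_slope_of_hasDerivAt (x := 0) (y := 1)
    (by simpa [ℓ] using hz) (by simpa [ℓ] using hw) zero_lt_one hderiv
  have hsecant : slope (f ∘ ℓ) 0 1 = f w - f z := by simp [slope, ℓ]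
  linarith

theorem norm_le_of_norm_smul_add_smul_deriv_le {E : Type*} [NormedAddCommGroup E]
    [NormedSpace ℝ E] {y y' : ℝ → E} {β t₀ C t : ℝ} (hβ : 0 < β) (ht₀ : 0 < t₀)
    (hy : ∀ s, t₀ ≤ s → HasDerivAt y (y' s) s)
    (hC : ∀ s, t₀ ≤ s → ‖β • y s + s • y' s‖ ≤ C) (ht : t₀ ≤ t) :
    ‖y t‖ ≤ ‖y t₀‖ + C / β := by
  have hpos : ∀ s, t₀ ≤ s → 0 < s := fun s hs => ht₀.trans_le hs
  have hq : ∀ s, t₀ ≤ s → HasDerivAt (fun r => r ^ β • y r)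
      (s ^ (β - 1) • (β • y s + s • y' s)) s := by
    intro s hs
    refine ((Real.hasDerivAt_rpow_const (Or.inl (hpos s hs).ne')).smul (hy s hs)).congr_deriv ?_
    rw [smul_add, smul_smul, smul_smul, ← Real.rpow_add_one (hpos s hs).ne', sub_add_cancel,
      mul_comm]
    module
  have hB : ∀ s, t₀ ≤ s → HasDerivAt (fun r => t₀ ^ β * ‖y t₀‖ + C / β * (r ^ β - t₀ ^ β))
      (C * s ^ (β - 1)) s := by
    intro s hs
    refine ((((Real.hasDerivAt_rpow_const (Or.inl (hpos s hs).ne')).sub_const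
      (t₀ ^ β)).const_mul (C / β)).const_add (t₀ ^ β * ‖y t₀‖)).congr_deriv ?_
    field_simp
  have hfence := image_norm_le_of_norm_deriv_right_le_deriv_boundary'
    (f := fun r => r ^ β • y r) (a := t₀) (b := t)
    (fun s hs => (hq s hs.1).continuousAt.continuousWithinAt)
    (fun s hs => (hq s hs.1).hasDerivWithinAt)
    (by rw [norm_smul, Real.norm_of_nonneg (Real.rpow_nonneg ht₀.le β)]; simp)
    (fun s hs => (hB s hs.1).continuousAt.continuousWithinAt)
    (fun s hs => (hB s hs.1).hasDerivWithinAt)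
    (fun s hs => by
      rw [norm_smul, Real.norm_of_nonneg (Real.rpow_nonneg (hpos s hs.1).le _), mul_comm]
      exact mul_le_mul_of_nonneg_right (hC s hs.1) (Real.rpow_nonneg (hpos s hs.1).le _))
    (right_mem_Icc.mpr ht)
  have htβ : 0 < t ^ β := Real.rpow_pos_of_pos (hpos t ht) β
  have ht₀β : t₀ ^ β ≤ t ^ β := Real.rpow_le_rpow ht₀.le ht hβ.le
  have hC0 : 0 ≤ C := (norm_nonneg _).trans (hC t₀ le_rfl)
  rw [norm_smul, Real.norm_of_nonneg htβ.le] at hfence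
  rw [← mul_le_mul_iff_of_pos_left htβ]
  calc t ^ β * ‖y t‖ ≤ t₀ ^ β * ‖y t₀‖ + C / β * (t ^ β - t₀ ^ β) := hfence
    _ ≤ t ^ β * ‖y t₀‖ + C / β * t ^ β := by
      gcongr
      · linarith [Real.rpow_nonneg ht₀.le β]
    _ = t ^ β * (‖y t₀‖ + C / β) := by ring

theorem norm_deriv_le_of_norm_smul_add_smul_deriv_le {E : Type*} [NormedAddCommGroup E]
    [NormedSpace ℝ E] {y y' : ℝ → E} {β t₀ C t : ℝ} (hβ : 0 < β) (ht₀ : 0 < t₀)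
    (hy : ∀ s, t₀ ≤ s → HasDerivAt y (y' s) s)
    (hC : ∀ s, t₀ ≤ s → ‖β • y s + s • y' s‖ ≤ C) (ht : t₀ ≤ t) :
    ‖y' t‖ ≤ (2 * C + β * ‖y t₀‖) / t := by
  have htpos : 0 < t := ht₀.trans_le ht
  have hyt := norm_le_of_norm_smul_add_smul_deriv_le hβ ht₀ hy hC ht
  rw [le_div_iff₀ htpos, mul_comm]
  calc t * ‖y' t‖ = ‖(β • y t + t • y' t) - β • y t‖ := by
        rw [add_sub_cancel_left, norm_smul, Real.norm_of_nonneg htpos.le]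
    _ ≤ ‖β • y t + t • y' t‖ + β * ‖y t‖ :=
      (norm_sub_le _ _).trans_eq (by rw [norm_smul, Real.norm_of_nonneg hβ.le])
    _ ≤ C + β * (‖y t₀‖ + C / β) := by gcongr; exact hC t ht
    _ = 2 * C + β * ‖y t₀‖ := by field_simp; ring

section AVDEnergy

variable {H : Type*} [NormedAddCommGroup H] [InnerProductSpace ℝ H]

noncomputable def avdEnergy (Φ : H → ℝ) (xstar : H) (α : ℝ) (x v : ℝ → H) (t : ℝ) : ℝ :=
  t ^ 2 * (Φ (x t) - Φ xstar) + ‖(α - 1) • (x t - xstar) + t • v t‖ ^ 2 / 2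

theorem hasDerivAt_avdEnergy [CompleteSpace H] {Φ : H → ℝ} {xstar g a : H} {α t : ℝ}
    {x v : ℝ → H} (hΦ : HasGradientAt Φ g (x t)) (hx : HasDerivAt x (v t) t)
    (hv : HasDerivAt v a t) (ht : t ≠ 0) (hode : a + (α / t) • v t + g = 0) :
    HasDerivAt (avdEnergy Φ xstar α x v)
      (2 * t * (Φ (x t) - Φ xstar) - (α - 1) * t * ⟪g, x t - xstar⟫) t := by
  have hΦx : HasDerivAt (fun s => Φ (x s)) ⟪g, v t⟫ t := by
    simpa [Function.comp_def] using hΦ.hasFDerivAt.comp_hasDerivAt t hx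
  have hp : HasDerivAt (fun s => (α - 1) • (x s - xstar) + s • v s) (-(t • g)) t := by
    refine (((hx.sub_const xstar).const_smul (α - 1)).add
      ((hasDerivAt_id t).smul hv)).congr_deriv ?_
    rw [eq_neg_of_add_eq_zero_left ((add_assoc _ _ _).symm.trans hode), id_eq, smul_neg,
      smul_add, smul_smul, mul_div_cancel₀ α ht]
    module
  refine (((hasDerivAt_pow 2 t).mul (hΦx.sub_const (Φ xstar))).add
    (hp.norm_sq.div_const 2)).congr_deriv ?_
  simp only [inner_neg_right, inner_smul_right, inner_add_right, inner_sub_right,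
    real_inner_comm g]
  ring

theorem antitoneOn_avdEnergy [CompleteSpace H] {Φ : H → ℝ} {xstar : H} {α t₀ : ℝ}
    {x v a : ℝ → H} (hΦ : ConvexOn ℝ univ Φ) (hΦd : Differentiable ℝ Φ)
    (hmin : ∀ y, Φ xstar ≤ Φ y) (hα : 3 ≤ α) (ht₀ : 0 < t₀)
    (hx : ∀ t, t₀ ≤ t → HasDerivAt x (v t) t) (hv : ∀ t, t₀ ≤ t → HasDerivAt v (a t) t)
    (hode : ∀ t, t₀ ≤ t → a t + (α / t) • v t + gradient Φ (x t) = 0) :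
    AntitoneOn (avdEnergy Φ xstar α x v) (Ici t₀) := by
  have hE : ∀ t ∈ Ici t₀, HasDerivAt (avdEnergy Φ xstar α x v)
      (2 * t * (Φ (x t) - Φ xstar) - (α - 1) * t * ⟪gradient Φ (x t), x t - xstar⟫) t :=
    fun t ht => hasDerivAt_avdEnergy (hΦd _).hasGradientAt (hx t ht) (hv t ht)
      (ht₀.trans_le ht).ne' (hode t ht)
  refine antitoneOn_of_hasDerivWithinAt_nonpos (convex_Ici t₀)
    (fun t ht => (hE t ht).continuousAt.continuousWithinAt)
    (fun t ht => (hE t (interior_subset ht)).hasDerivWithinAt) fun t ht => ?_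
  have ht : t₀ ≤ t := interior_subset (s := Ici t₀) ht
  have hgap : 0 ≤ Φ (x t) - Φ xstar := sub_nonneg.mpr (hmin _)
  have hconv : Φ (x t) - Φ xstar ≤ ⟪gradient Φ (x t), x t - xstar⟫ := by
    have := hΦ.add_le_of_hasFDerivAt (mem_univ _) (mem_univ xstar)
      (hΦd (x t)).hasGradientAt.hasFDerivAt
    rw [InnerProductSpace.toDual_apply_apply, ← neg_sub, inner_neg_right] at this
    linarith
  have htpos : 0 < t := ht₀.trans_le ht
  have h1 := mul_le_mul_of_nonneg_left hconv (by nlinarith : 0 ≤ (α - 1) * t)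
  have h2 : 0 ≤ (α - 3) * t * (Φ (x t) - Φ xstar) :=
    mul_nonneg (mul_nonneg (by linarith) htpos.le) hgap
  linarith

theorem norm_sq_le_two_mul_avdEnergy {Φ : H → ℝ} {xstar : H} {α t : ℝ} {x v : ℝ → H}
    (hmin : ∀ y, Φ xstar ≤ Φ y) :
    ‖(α - 1) • (x t - xstar) + t • v t‖ ^ 2 ≤ 2 * avdEnergy Φ xstar α x v t := by
  have := mul_nonneg (sq_nonneg t) (sub_nonneg.mpr (hmin (x t)))
  rw [avdEnergy]
  linarith

end AVDEnergy

/-- for `α ≥ 3`, the trajectory of `(AVD)_α` is bounded and the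
speed satisfies `‖ẋ(t)‖ = O(1/t)`. -/
theorem stmt_4
    {H : Type*} [NormedAddCommGroup H] [InnerProductSpace ℝ H] [CompleteSpace H]
    (Φ : H → ℝ) (hΦconv : ConvexOn ℝ Set.univ Φ) (hΦC1 : ContDiff ℝ 1 Φ)
    (xstar : H) (hxstar : ∀ y : H, Φ xstar ≤ Φ y)
    (α t₀ : ℝ) (hα : 3 ≤ α) (ht₀ : 0 < t₀)
    (x : ℝ → H) (hx : ContDiff ℝ 2 x)
    (hode : ∀ t : ℝ, t₀ ≤ t →
      deriv (deriv x) t + (α / t) • deriv x t + gradient Φ (x t) = 0) :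
    (∃ B : ℝ, ∀ t : ℝ, t₀ ≤ t → ‖x t‖ ≤ B) ∧
    (∃ M : ℝ, 0 ≤ M ∧ ∀ t : ℝ, t₀ ≤ t → ‖deriv x t‖ ≤ M / t) := by
  have hxd : Differentiable ℝ x := hx.differentiable (by norm_num)
  have hvd : Differentiable ℝ (deriv x) := hx.differentiable_deriv_two
  have hE := antitoneOn_avdEnergy hΦconv (hΦC1.differentiable one_ne_zero) hxstar hα ht₀
    (fun t _ => (hxd t).hasDerivAt) (fun t _ => (hvd t).hasDerivAt) hode
  set C := √(2 * avdEnergy Φ xstar α x (deriv x) t₀)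
  have hp : ∀ t, t₀ ≤ t → ‖(α - 1) • (x t - xstar) + t • deriv x t‖ ≤ C := fun t ht => by
    rw [← abs_norm]
    exact Real.abs_le_sqrt <| (norm_sq_le_two_mul_avdEnergy hxstar).trans <|
      mul_le_mul_of_nonneg_left (hE self_mem_Ici ht ht) zero_le_two
  have hβ : 0 < α - 1 := by linarith
  have hy : ∀ t, t₀ ≤ t → HasDerivAt (fun s => x s - xstar) (deriv x t) t :=
    fun t _ => (hxd t).hasDerivAt.sub_const xstar
  refine ⟨⟨‖xstar‖ + (‖x t₀ - xstar‖ + C / (α - 1)), fun t ht => ?_⟩,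
    ⟨2 * C + (α - 1) * ‖x t₀ - xstar‖, by positivity, fun t ht =>
      norm_deriv_le_of_norm_smul_add_smul_deriv_le hβ ht₀ hy hp ht⟩⟩
  exact (norm_le_norm_add_norm_sub' (x t) xstar).trans
    ((add_le_add_iff_left _).mpr (norm_le_of_norm_smul_add_smul_deriv_le hβ ht₀ hy hp ht))
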